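/- arXiv:2408.12269 — 3 statements merged into one kernel-verified Lean document; each statement's English description precedes it below -/
import Mathlib

section
/- Let Γ ⊆ [0, ∞) satisfy the descending chain condition, and let Γ_+ := ({finite sums of elements of Γ} ∪ {0}) ∩ [0,1]. Then the set D(Γ) := {(m − 1 + γ)/m : m a positive integer, γ ∈ Γ_+} satisfies the descending chain condition. -/
/-!
Sums of a well-founded set of nonnegative numbers form a well-founded set, since they lie in the
additive monoid it generates. An element `(m - 1 + γ)/m = 1 - (1 - γ)/m` of `D(Γ)` lying below a
fixed `c < 1` forces `m ≤ 1/(1 - c)`, so below any such `c` the set `D(Γ)` is a finite union of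
monotone images of the well-founded set `Γ₊`; and a strictly decreasing sequence in `D(Γ) ⊆ (-∞, 1]`
drops below `1` after one step.
-/

open Set

theorem isWF_iff_not_exists_strictAnti {α : Type*} [Preorder α] {s : Set α} :
    s.IsWF ↔ ¬ ∃ f : ℕ → α, (∀ n, f n ∈ s) ∧ StrictAnti f := by
  rw [isWF_iff_no_descending_seq]
  exact ⟨fun h ⟨f, hfs, hf⟩ => h f hf hfs, fun h f hf hfs => h ⟨f, hfs, hf⟩⟩

theorem isWF_of_subset_Iic_of_isWF_inter_Iic {α : Type*} [Preorder α] {s : Set α} {b : α}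
    (hs : s ⊆ Iic b) (h : ∀ c < b, (s ∩ Iic c).IsWF) : s.IsWF := by
  rw [isWF_iff_no_descending_seq]
  intro f hf hfs
  have hf1 : f 1 < b := (hf zero_lt_one).trans_le (hs (hfs 0))
  refine isWF_iff_no_descending_seq.mp (h _ hf1) (fun n => f (n + 1))
    (fun _ _ hmn => hf (Nat.succ_lt_succ hmn)) fun n => ⟨hfs _, ?_⟩
  exact hf.antitone (Nat.le_add_left 1 n)

theorem isWF_setOf_multiset_sum {α : Type*} [AddCommMonoid α] [LinearOrder α]
    [IsOrderedCancelAddMonoid α] {Γ : Set α} (hΓ0 : Γ ⊆ Ici 0) (hΓ : Γ.IsWF) :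
    {y : α | ∃ s : Multiset α, s ≠ 0 ∧ (∀ z ∈ s, z ∈ Γ) ∧ s.sum = y}.IsWF := by
  refine (hΓ.isPWO.addSubmonoid_closure (fun x hx => hΓ0 hx)).isWF.mono ?_
  rintro _ ⟨s, -, hsΓ, rfl⟩
  exact AddSubmonoid.multiset_sum_mem _ s fun z hz => AddSubmonoid.subset_closure (hsΓ z hz)

def dSet (G : Set ℝ) : Set ℝ :=
  {x | ∃ m : ℕ, 0 < m ∧ ∃ γ ∈ G, x = ((m : ℝ) - 1 + γ) / m}

theorem dSet_subset_Iic_one {G : Set ℝ} (hG : G ⊆ Iic 1) : dSet G ⊆ Iic 1 := by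
  rintro _ ⟨m, hm, γ, hγ, rfl⟩
  rw [mem_Iic, div_le_one (Nat.cast_pos.mpr hm)]
  linarith [mem_Iic.mp (hG hγ)]

theorem natCast_le_one_div_one_sub {m : ℕ} (hm : 0 < m) {γ c : ℝ} (hγ : 0 ≤ γ) (hc : c < 1)
    (h : ((m : ℝ) - 1 + γ) / m ≤ c) : (m : ℝ) ≤ 1 / (1 - c) := by
  have hm' : (0 : ℝ) < m := Nat.cast_pos.mpr hm
  rw [div_le_iff₀ hm'] at h
  rw [le_div_iff₀ (sub_pos.mpr hc)]
  linarith

theorem dSet_inter_Iic_subset {G : Set ℝ} (hG : G ⊆ Ici 0) {c : ℝ} (hc : c < 1) :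
    dSet G ∩ Iic c ⊆
      ⋃ k ∈ Finset.range (⌈1 / (1 - c)⌉₊ + 1), (fun x => ((k : ℝ) - 1 + x) / k) '' G := by
  rintro _ ⟨⟨m, hm, γ, hγ, rfl⟩, hle⟩
  have hmc := natCast_le_one_div_one_sub hm (hG hγ) hc hle
  refine mem_biUnion (Finset.mem_range_succ_iff.mpr ?_) ⟨γ, hγ, rfl⟩
  exact Nat.cast_le.mp (hmc.trans (Nat.le_ceil _))

theorem Set.IsWF.dSet {G : Set ℝ} (hG : G ⊆ Icc 0 1) (hGwf : G.IsWF) : (dSet G).IsWF := by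
  refine isWF_of_subset_Iic_of_isWF_inter_Iic
    (dSet_subset_Iic_one fun _ hx => (hG hx).2) fun c hc => ?_
  refine IsWF.mono ?_ (dSet_inter_Iic_subset (fun _ hx => (hG hx).1) hc)
  rw [← isPWO_iff_isWF, Finset.isPWO_bUnion]
  intro k _
  refine hGwf.isPWO.image_of_monotone fun a b hab => ?_
  gcongr

/-- For Γ ⊆ [0,∞) a DCC set, with Γ₊ = ({finite sums of elements of Γ} ∪ {0}) ∩ [0,1],
the set D(Γ) = {(m - 1 + γ)/m : m ∈ ℕ⁺, γ ∈ Γ₊} satisfies the DCC. -/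
theorem dcc_D_of_dcc (Γ : Set ℝ) (hΓ0 : Γ ⊆ Set.Ici 0)
    (hΓ : ¬ ∃ f : ℕ → ℝ, (∀ n, f n ∈ Γ) ∧ StrictAnti f) :
    ¬ ∃ f : ℕ → ℝ,
      (∀ n, f n ∈ {x : ℝ | ∃ m : ℕ, 0 < m ∧ ∃ γ ∈
        (({y : ℝ | ∃ s : Multiset ℝ, s ≠ 0 ∧ (∀ z ∈ s, z ∈ Γ) ∧ s.sum = y} ∪ {0})
          ∩ Set.Icc 0 1),
        x = ((m : ℝ) - 1 + γ) / m}) ∧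
      StrictAnti f := by
  have hsums := isWF_setOf_multiset_sum hΓ0 (isWF_iff_not_exists_strictAnti.mpr hΓ)
  have hΓplus : ((_ ∪ {0}) ∩ Icc 0 1 : Set ℝ).IsWF :=
    (hsums.union (finite_singleton 0).isWF).mono inter_subset_left
  exact isWF_iff_not_exists_strictAnti.mp (hΓplus.dSet inter_subset_right)
end

section
/- Let a_1, …, a_r be positive real numbers and c ≥ 0. Then the set Γ := { Σ_{i=1}^r a_i γ_i : γ_i ∈ ℤ, γ_i ≥ −c for all i } ∩ (0, ∞) has strictly positive infimum, which is attained as a minimum if Γ is nonempty. -/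
/-- The strictly positive values of Σ aᵢγᵢ, γᵢ ∈ ℤ, γᵢ ≥ −c, form a set whose
infimum is strictly positive and attained as a minimum when nonempty. -/
theorem pos_inf_lattice_values (r : ℕ) (hr : 0 < r) (a : Fin r → ℝ)
    (ha : ∀ i, 0 < a i) (c : ℝ) (hc : 0 ≤ c) :
    letI Γ : Set ℝ := {x : ℝ | ∃ γ : Fin r → ℤ, (∀ i, -c ≤ (γ i : ℝ)) ∧
      x = ∑ i, a i * (γ i : ℝ)} ∩ Set.Ioi 0
    Γ.Nonempty → 0 < sInf Γ ∧ ∃ m ∈ Γ, (∀ x ∈ Γ, m ≤ x) ∧ m = sInf Γ := by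
  intro hne
  set Γ : Set ℝ := {x : ℝ | ∃ γ : Fin r → ℤ, (∀ i, -c ≤ (γ i : ℝ)) ∧
    x = ∑ i, a i * (γ i : ℝ)} ∩ Set.Ioi 0 with hΓ
  obtain ⟨y, hy⟩ := hne
  -- bound on the γ's contributing to values ≤ y
  set M : ℝ := y + c * ∑ j, a j with hM
  set N : Fin r → ℤ := fun i => ⌊M / a i⌋ with hN
  set T : Set (Fin r → ℤ) := Set.pi Set.univ fun i => Set.Icc (⌈-c⌉) (N i) with hT
  have hTfin : T.Finite := Set.Finite.pi fun i => Set.finite_Icc _ _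
  set S : Set ℝ := Γ ∩ Set.Iic y with hS
  have hSsub : S ⊆ (fun γ : Fin r → ℤ => ∑ i, a i * (γ i : ℝ)) '' T := by
    rintro x ⟨⟨⟨γ, hγc, hγx⟩, hx0⟩, hxy⟩
    refine ⟨γ, ?_, hγx.symm⟩
    intro i _
    refine ⟨Int.ceil_le.2 (hγc i), Int.le_floor.2 ?_⟩
    have hsum : ∑ j ∈ Finset.univ.erase i, a j * (γ j : ℝ) ≥ -(c * ∑ j, a j) := by
      have h1 : ∀ j ∈ Finset.univ.erase i, a j * (-c) ≤ a j * (γ j : ℝ) := fun j _ =>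
        mul_le_mul_of_nonneg_left (hγc j) (ha j).le
      calc -(c * ∑ j, a j) ≤ -(c * ∑ j ∈ Finset.univ.erase i, a j) := by
              have : ∑ j ∈ Finset.univ.erase i, a j ≤ ∑ j, a j :=
                Finset.sum_le_sum_of_subset_of_nonneg (Finset.erase_subset _ _)
                  (fun j _ _ => (ha j).le)
              nlinarith
        _ = ∑ j ∈ Finset.univ.erase i, a j * (-c) := by
              rw [← Finset.sum_mul]; ring
        _ ≤ _ := Finset.sum_le_sum h1
    have hsplit : a i * (γ i : ℝ) + ∑ j ∈ Finset.univ.erase i, a j * (γ j : ℝ)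
        = ∑ j, a j * (γ j : ℝ) := Finset.add_sum_erase _ (fun j => a j * (γ j : ℝ)) (Finset.mem_univ i)
    have hxle : a i * (γ i : ℝ) ≤ M := by
      have : ∑ j, a j * (γ j : ℝ) ≤ y := hγx ▸ hxy
      rw [hM]; linarith
    rw [le_div_iff₀ (ha i)]; linarith [hxle]
  have hSfin : S.Finite := (hTfin.image _).subset hSsub
  have hSne : S.Nonempty := ⟨y, hy, le_refl y⟩
  obtain ⟨m, hmS, hmmin⟩ : ∃ m ∈ S, ∀ x ∈ S, m ≤ x := by
    obtain ⟨m, hm1, hm2⟩ := hSfin.toFinset.exists_min_image id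
      (by rwa [← Set.Finite.toFinset_nonempty hSfin] at hSne)
    exact ⟨m, hSfin.mem_toFinset.1 hm1, fun x hx => hm2 x (hSfin.mem_toFinset.2 hx)⟩
  have hmΓ : m ∈ Γ := hmS.1
  have hlb : ∀ x ∈ Γ, m ≤ x := by
    intro x hx
    by_cases h : x ≤ y
    · exact hmmin x ⟨hx, h⟩
    · exact hmS.2.trans (le_of_not_ge h)
  have hinf : m = sInf Γ :=
    le_antisymm (le_csInf ⟨y, hy⟩ hlb) (csInf_le ⟨m, hlb⟩ hmΓ)
  exact ⟨hinf ▸ hmΓ.2, m, hmΓ, hlb, hinf⟩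
end

section
/- Let Γ ⊆ (0, ∞) be a set satisfying the descending chain condition and let c > 0. Then the set of elements γ ∈ Γ such that there exists a finite sequence γ_1, …, γ_k of elements of Γ with γ_1 = γ and γ_1 + γ_2 + ⋯ + γ_k = c, is finite. -/
/-! Writing a sequence as `γ :: rest`, the pair `(γ, rest.sum)` lies in the antidiagonal over `c`
of `Γ` and the additive monoid generated by `Γ`. Both sets are partially well-ordered (the latter
because `Γ` is nonnegative), and such an antidiagonal is finite; the first terms are its first
coordinates. -/

theorem Set.isWF_of_not_exists_strictAnti {α : Type*} [Preorder α] {s : Set α}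
    (h : ¬ ∃ f : ℕ → α, (∀ n, f n ∈ s) ∧ StrictAnti f) : s.IsWF :=
  Set.isWF_iff_no_descending_seq.mpr fun f hf hmem => h ⟨f, hmem, hf⟩

theorem Set.finite_heads_of_sum_eq {α : Type*} [AddCommMonoid α] [PartialOrder α]
    [IsOrderedCancelAddMonoid α] {s : Set α} (hs : s.IsPWO) (hnonneg : ∀ x ∈ s, 0 ≤ x) (a : α) :
    {γ : α | γ ∈ s ∧ ∃ l : List α, (∀ x ∈ l, x ∈ s) ∧ l.head? = some γ ∧ l.sum = a}.Finite := by
  have hanti : (Set.antidiagonal s (AddSubmonoid.closure s) a).Finite :=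
    Set.AddAntidiagonal.finite_of_isPWO hs (hs.addSubmonoid_closure hnonneg) a
  refine (hanti.image Prod.fst).subset ?_
  rintro γ ⟨hγ, _ | ⟨_, rest⟩, hl, hhead, hsum⟩
  · cases hhead
  · obtain rfl : _ = γ := Option.some_injective _ hhead
    have hrest : rest.sum ∈ AddSubmonoid.closure s :=
      list_sum_mem fun x hx => AddSubmonoid.subset_closure (hl x (List.mem_cons_of_mem _ hx))
    exact ⟨(_, rest.sum), ⟨hγ, hrest, hsum⟩, rfl⟩

theorem finite_first_terms_general (Γ : Set ℝ) (hΓpos : Γ ⊆ Set.Ioi 0)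
    (hΓ : ¬ ∃ f : ℕ → ℝ, (∀ n, f n ∈ Γ) ∧ StrictAnti f)
    (c : ℝ) :
    {γ : ℝ | γ ∈ Γ ∧ ∃ l : List ℝ, (∀ x ∈ l, x ∈ Γ) ∧
      l.head? = some γ ∧ l.sum = c}.Finite :=
  Set.finite_heads_of_sum_eq (Set.isWF_of_not_exists_strictAnti hΓ).isPWO
    (fun _ hx => (hΓpos hx).le) c

/-- For a DCC set Γ ⊆ (0,∞) and c > 0, only finitely many elements of Γ occur as
the first term of a finite sequence of elements of Γ summing to c. -/
theorem finite_first_terms (Γ : Set ℝ) (hΓpos : Γ ⊆ Set.Ioi 0)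
    (hΓ : ¬ ∃ f : ℕ → ℝ, (∀ n, f n ∈ Γ) ∧ StrictAnti f)
    (c : ℝ) (hc : 0 < c) :
    {γ : ℝ | γ ∈ Γ ∧ ∃ l : List ℝ, (∀ x ∈ l, x ∈ Γ) ∧
      l.head? = some γ ∧ l.sum = c}.Finite :=
  finite_first_terms_general Γ hΓpos hΓ c
end
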